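/- arXiv:2502.04502 — 6 statements merged into one kernel-verified Lean document; each statement's English description precedes it below -/
import Mathlib

section
/- Let O be a Dedekind domain, μ ⊆ O a nonzero ideal with μ² = (z) principal, and K the field of fractions. Let A = O·1 ⊕ μ·X ⊆ K·1 ⊕ K·X with multiplication determined by X² = aX + b for a, b ∈ K. Then A is closed under multiplication (i.e. (u₁X)(u₂X) ∈ A for all u₁, u₂ ∈ μ) if and only if a ∈ z⁻¹μ and b ∈ z⁻¹O. -/
/-- Let `μ ⊆ O` be a nonzero ideal of a Dedekind domain with `μ² = (z)`, `K` the fraction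
field, and `A = O·1 ⊕ μ·X ⊆ K·1 ⊕ K·X` with `X² = aX + b`.  Then `A` is closed under
multiplication (i.e. `(u₁X)(u₂X) = (b u₁u₂)·1 + (a u₁u₂)·X ∈ A` for all `u₁, u₂ ∈ μ`)
iff `a ∈ z⁻¹μ` and `b ∈ z⁻¹O` (i.e. `za` lies in the image of `μ` and `zb` in the image
of `O`). -/
theorem stmt2 (O : Type*) [CommRing O] [IsDomain O] [IsDedekindDomain O]
    (K : Type*) [Field K] [Algebra O K] [IsFractionRing O K]
    (μ : Ideal O) (hμ : μ ≠ ⊥) (z : O) (hsq : μ * μ = Ideal.span {z})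
    (a b : K) :
    (∀ u₁ ∈ μ, ∀ u₂ ∈ μ,
        (b * (algebraMap O K u₁ * algebraMap O K u₂),
         a * (algebraMap O K u₁ * algebraMap O K u₂)) ∈
          (LinearMap.range (Algebra.linearMap O K)).prod
            (Submodule.map (Algebra.linearMap O K) μ))
      ↔ (algebraMap O K z * a ∈ Submodule.map (Algebra.linearMap O K) μ ∧
         algebraMap O K z * b ∈ LinearMap.range (Algebra.linearMap O K)) := by
  constructor
  · intro H
    have hz : z ∈ μ * μ := hsq ▸ Ideal.mem_span_singleton_self z
    refine Submodule.mul_induction_on hz ?_ ?_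
    · intro u₁ h₁ u₂ h₂
      obtain ⟨hb, ha⟩ := Submodule.mem_prod.mp (H u₁ h₁ u₂ h₂)
      refine ⟨?_, ?_⟩
      · simpa [map_mul, mul_comm] using ha
      · simpa [map_mul, mul_comm] using hb
    · rintro x y ⟨hx₁, hx₂⟩ ⟨hy₁, hy₂⟩
      refine ⟨?_, ?_⟩
      · simpa [map_add, add_mul] using Submodule.add_mem _ hx₁ hy₁
      · simpa [map_add, add_mul] using Submodule.add_mem _ hx₂ hy₂
  · rintro ⟨ha, hb⟩
    obtain ⟨m, hm, hma⟩ := ha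
    obtain ⟨c, hc⟩ := hb
    rw [Algebra.linearMap_apply] at hma hc
    intro u₁ h₁ u₂ h₂
    have h12 : u₁ * u₂ ∈ Ideal.span {z} := hsq ▸ Ideal.mul_mem_mul h₁ h₂
    obtain ⟨t, ht⟩ := Ideal.mem_span_singleton'.mp h12
    rw [Submodule.mem_prod]
    constructor
    · refine ⟨c * t, ?_⟩
      have : algebraMap O K u₁ * algebraMap O K u₂ = algebraMap O K t * algebraMap O K z := by
        rw [← map_mul, ← map_mul, ht]
      simp only [Algebra.linearMap_apply, map_mul, this]
      rw [hc]; ring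
    · refine ⟨m * t, μ.mul_mem_right t hm, ?_⟩
      have : algebraMap O K u₁ * algebraMap O K u₂ = algebraMap O K t * algebraMap O K z := by
        rw [← map_mul, ← map_mul, ht]
      simp only [Algebra.linearMap_apply, map_mul, this]
      rw [hma]; ring
end

section
/- Let O be a Dedekind domain, μ a non-principal ideal with μ² = (z), and let ε(1) ∈ O, ε_X ∈ μ, t ∈ O. Suppose there exist c ∈ O, d ∈ μ, d' ∈ O satisfying: c·ε(1) + z⁻¹·d·ε_X = 1, c·ε_X = −d·t, d'·ε_X = −d·ε(1), and z⁻¹·d·ε_X + d'·t = 1 (all equations in the fraction field K). Then ε(1) ≠ 0, t ≠ 0, c ≠ 0, and d' ≠ 0. -/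
/-!
If one of `ε(1)`, `t`, `c`, `d'` vanished, the first or the last equation would collapse to
`z⁻¹ d ε_X = 1`, i.e. `d ε_X = z`. Then `μ² = (d)(ε_X)` with `(d), (ε_X) ⊆ μ`; cancelling `μ`
in the Dedekind domain `O` forces `(d) = μ`, contradicting that `μ` is not principal.
-/

theorem Ideal.isPrincipal_of_mul_self_eq_span_mul {R : Type*} [CommRing R] [IsDedekindDomain R]
    {I : Ideal R} {a b : R} (ha : a ∈ I) (hb : b ∈ I) (h : I * I = Ideal.span {a * b}) :
    I.IsPrincipal := by
  rcases eq_or_ne I ⊥ with rfl | hI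
  · exact bot_isPrincipal
  obtain ⟨A, hA⟩ := Ideal.dvd_iff_le.mpr ((Ideal.span_singleton_le_iff_mem I).mpr ha)
  obtain ⟨B, hB⟩ := Ideal.dvd_iff_le.mpr ((Ideal.span_singleton_le_iff_mem I).mpr hb)
  have hAB : A * B = 1 := by
    refine mul_left_cancel₀ (mul_ne_zero hI hI) ?_
    calc I * I * (A * B) = (I * A) * (I * B) := by ring
      _ = I * I * 1 := by rw [← hA, ← hB, Ideal.span_singleton_mul_span_singleton, h, mul_one]
  have hA_top : A = ⊤ := Ideal.isUnit_iff.mp (.of_mul_eq_one B hAB)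
  exact ⟨a, by rw [Ideal.submodule_span_eq, hA, hA_top, Ideal.mul_top]⟩

theorem eq_of_inv_mul_mul_eq_one {K : Type*} [DivisionRing K] {z d e : K}
    (h : z⁻¹ * d * e = 1) : d * e = z := by
  have hz : z ≠ 0 := by
    rintro rfl
    simp at h
  rwa [mul_assoc, inv_mul_eq_one₀ hz, eq_comm] at h

theorem stmt4_general (O : Type*) [CommRing O] [IsDedekindDomain O]
    (K : Type*) [Field K] [Algebra O K] [IsFractionRing O K]
    (μ : Ideal O) (hnp : ¬ Submodule.IsPrincipal μ)
    (z : O) (hsq : μ * μ = Ideal.span {z})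
    (ε1 t c d' εX d : O) (hεX : εX ∈ μ) (hd : d ∈ μ)
    (h1 : algebraMap O K c * algebraMap O K ε1 +
        (algebraMap O K z)⁻¹ * algebraMap O K d * algebraMap O K εX = 1)
    (h4 : (algebraMap O K z)⁻¹ * algebraMap O K d * algebraMap O K εX +
        algebraMap O K d' * algebraMap O K t = 1) :
    ε1 ≠ 0 ∧ t ≠ 0 ∧ c ≠ 0 ∧ d' ≠ 0 := by
  have hne_one : (algebraMap O K z)⁻¹ * algebraMap O K d * algebraMap O K εX ≠ 1 := by
    intro h
    have hdεX : d * εX = z := IsFractionRing.injective O K (by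
      rw [map_mul]
      exact eq_of_inv_mul_mul_eq_one h)
    exact hnp (Ideal.isPrincipal_of_mul_self_eq_span_mul hd hεX (hdεX ▸ hsq))
  refine ⟨fun h => hne_one ?_, fun h => hne_one ?_, fun h => hne_one ?_, fun h => hne_one ?_⟩
  · simpa [h] using h1
  · simpa [h] using h4
  · simpa [h] using h1
  · simpa [h] using h4

/-- Nonvanishing of parameters: for a non-principal ideal `μ` with `μ² = (z)` in a
Dedekind domain, if `c ∈ O`, `d ∈ μ`, `d' ∈ O` satisfy the four trace equations
(in the fraction field `K`), then `ε(1) ≠ 0`, `t ≠ 0`, `c ≠ 0` and `d' ≠ 0`. -/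
theorem stmt4 (O : Type*) [CommRing O] [IsDomain O] [IsDedekindDomain O]
    (K : Type*) [Field K] [Algebra O K] [IsFractionRing O K]
    (μ : Ideal O) (hnp : ¬ Submodule.IsPrincipal μ)
    (z : O) (hz : z ≠ 0) (hsq : μ * μ = Ideal.span {z})
    (ε1 t c d' εX d : O) (hεX : εX ∈ μ) (hd : d ∈ μ)
    (h1 : algebraMap O K c * algebraMap O K ε1 +
        (algebraMap O K z)⁻¹ * algebraMap O K d * algebraMap O K εX = 1)
    (h2 : algebraMap O K c * algebraMap O K εX = -(algebraMap O K d * algebraMap O K t))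
    (h3 : algebraMap O K d' * algebraMap O K εX = -(algebraMap O K d * algebraMap O K ε1))
    (h4 : (algebraMap O K z)⁻¹ * algebraMap O K d * algebraMap O K εX +
        algebraMap O K d' * algebraMap O K t = 1) :
    ε1 ≠ 0 ∧ t ≠ 0 ∧ c ≠ 0 ∧ d' ≠ 0 :=
  stmt4_general O K μ hnp z hsq ε1 t c d' εX d hεX hd h1 h4
end

section
/- Let O be a Dedekind domain with fraction field K, μ a non-principal ideal with μ² = (z), and A = O·1 ⊕ μ·X with multiplication X² = z⁻¹ā·X + z⁻¹b̄ where ā ∈ O and b̄ ∈ O^×. Define ε : A → O by ε(1) = λ and ε(uX) = 0 for u ∈ μ, where λ ∈ O^×. Then ε is a nondegenerate trace, i.e., the map ε̃ : A → Hom_O(A, O) given by ε̃(x)(y) = ε(xy) is an isomorphism of O-modules. -/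
/-!
In coordinates `A = O ⊕ μ`, the pairing is `ε(xy) = λ (x₁ y₁ + b̄ z⁻¹ x₂ y₂)`, so it is the
orthogonal sum of `λ ·` on `O`, perfect because `λ` is a unit, and of `b̄ z⁻¹ ·` on `μ`. The
latter is perfect because `Hom_O(μ, O) = z⁻¹ μ`: writing `z = ∑ pᵢ qᵢ` with `pᵢ, qᵢ ∈ μ`, a
functional `ψ` is multiplication by `z⁻¹ ∑ pᵢ ψ(qᵢ)`. For uniqueness, pairing `d ∈ μ` with
itself gives `b̄ z⁻¹ d²`, which vanishes only for `d = 0`.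
-/

/-- Multiplication on `K·1 ⊕ K·X ≅ K × K` determined by `X² = aX + b`. -/
def qmul {K : Type*} [Field K] (a b : K) (p q : K × K) : K × K :=
  (p.1 * q.1 + b * (p.2 * q.2), p.1 * q.2 + p.2 * q.1 + a * (p.2 * q.2))

namespace Ideal

variable {R : Type*} [CommRing R] {I : Ideal R}

theorem exists_mul_eq_mul_of_mem_mul {w : R} (hw : w ∈ I * I) (ψ : I →ₗ[R] R) :
    ∃ s ∈ I, ∀ t : I, s * t = w * ψ t := by
  refine Submodule.mul_induction_on hw ?_ ?_
  · intro p hp q hq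
    refine ⟨p * ψ ⟨q, hq⟩, I.mul_mem_right _ hp, fun t => ?_⟩
    have hswap : (t : R) • (⟨q, hq⟩ : I) = q • t := Subtype.ext (mul_comm _ _)
    have h := congrArg ψ hswap
    rw [map_smul, map_smul, smul_eq_mul, smul_eq_mul] at h
    linear_combination p * h
  · rintro x y ⟨s₁, hs₁, h₁⟩ ⟨s₂, hs₂, h₂⟩
    exact ⟨s₁ + s₂, I.add_mem hs₁ hs₂, fun t => by rw [add_mul, h₁, h₂, add_mul]⟩

theorem ne_zero_of_mul_self_eq_span_singleton [NoZeroDivisors R] {z : R}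
    (hsq : I * I = span {z}) {t : R} (ht : t ∈ I) (ht0 : t ≠ 0) : z ≠ 0 := by
  rintro rfl
  have htt : t * t ∈ span {(0 : R)} := hsq ▸ mul_mem_mul ht ht
  rw [span_singleton_eq_bot.mpr rfl, mem_bot, mul_self_eq_zero] at htt
  exact ht0 htt

end Ideal

section FractionField

variable {O K : Type*} [CommRing O] [IsDomain O] [Field K] [Algebra O K] [IsFractionRing O K]
  {μ : Ideal O} {z : O}

theorem exists_forall_div_mul_eq (hsq : μ * μ = Ideal.span {z}) (ψ : μ →ₗ[O] O) :
    ∃ s ∈ μ, ∀ t : μ,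
      algebraMap O K s / algebraMap O K z * algebraMap O K t = algebraMap O K (ψ t) := by
  obtain ⟨s, hs, hst⟩ :=
    Ideal.exists_mul_eq_mul_of_mem_mul (hsq ▸ Ideal.mem_span_singleton_self z) ψ
  refine ⟨s, hs, fun t => ?_⟩
  rcases eq_or_ne (t : O) 0 with ht0 | ht0
  · obtain rfl : t = 0 := Subtype.ext ht0
    simp
  have hz : algebraMap O K z ≠ 0 := by
    simpa using Ideal.ne_zero_of_mul_self_eq_span_singleton hsq t.2 ht0
  rw [div_mul_eq_mul_div, div_eq_iff hz, ← map_mul, ← map_mul, hst, mul_comm]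

theorem eq_zero_of_div_mul_self_eq_zero (hsq : μ * μ = Ideal.span {z}) {β d : O}
    (hβ : β ≠ 0) (hd : d ∈ μ)
    (h : algebraMap O K β / algebraMap O K z * (algebraMap O K d * algebraMap O K d) = 0) :
    d = 0 := by
  by_contra hd0
  have hz := Ideal.ne_zero_of_mul_self_eq_span_singleton hsq hd hd0
  simp [hβ, hz, hd0] at h

end FractionField

section QuadLattice

variable {O : Type*} (K : Type*) [CommRing O] [Field K] [Algebra O K] (μ : Ideal O)

abbrev quadLattice : Submodule O (K × K) :=
  (LinearMap.range (Algebra.linearMap O K)).prod (Submodule.map (Algebra.linearMap O K) μ)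

namespace quadLattice

def one : quadLattice K μ := ⟨(1, 0), ⟨1, map_one (algebraMap O K)⟩, zero_mem _⟩

def inr : μ →ₗ[O] quadLattice K μ :=
  (LinearMap.inr O K K ∘ₗ Algebra.linearMap O K ∘ₗ μ.subtype).codRestrict _
    fun t => ⟨zero_mem _, Submodule.mem_map_of_mem t.2⟩

variable {K μ}

theorem coe_one : (one K μ : K × K) = (1, 0) := rfl

theorem coe_inr (t : μ) : (inr K μ t : K × K) = (0, algebraMap O K t) := rfl

theorem coe_smul_one_add_inr (v : O) (t : μ) :
    ((v • one K μ + inr K μ t : quadLattice K μ) : K × K) =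
      (algebraMap O K v, algebraMap O K t) := by
  ext <;> simp [coe_one, coe_inr, Algebra.smul_def]

theorem exists_eq_smul_one_add_inr (y : quadLattice K μ) :
    ∃ (v : O) (t : μ), y = v • one K μ + inr K μ t := by
  obtain ⟨⟨v, hv⟩, t, ht, hft⟩ := Submodule.mem_prod.mp y.2
  exact ⟨v, ⟨t, ht⟩, Subtype.ext (by rw [coe_smul_one_add_inr]; exact Prod.ext hv.symm hft.symm)⟩

theorem eq_of_forall_qmul_fst_eq [IsDomain O] [IsFractionRing O K] {z : O}
    (hsq : μ * μ = Ideal.span {z}) (a : K) {β : O} (hβ : β ≠ 0) {x x' : quadLattice K μ}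
    (h : ∀ y : quadLattice K μ, (qmul a (algebraMap O K β / algebraMap O K z) x y).1 =
      (qmul a (algebraMap O K β / algebraMap O K z) x' y).1) :
    x = x' := by
  obtain ⟨u, s, rfl⟩ := exists_eq_smul_one_add_inr x
  obtain ⟨u', s', rfl⟩ := exists_eq_smul_one_add_inr x'
  have hu := h (one K μ)
  simp only [qmul, coe_smul_one_add_inr, coe_one, mul_one, mul_zero, add_zero] at hu
  have hs := h (inr K μ (s - s'))
  simp only [qmul, coe_smul_one_add_inr, coe_inr, mul_zero, zero_add] at hs
  have hss' : ((s - s' : μ) : O) = 0 := by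
    refine eq_zero_of_div_mul_self_eq_zero (K := K) hsq hβ (s - s').2 ?_
    rw [Submodule.coe_sub, map_sub] at hs ⊢
    linear_combination hs
  rw [IsFractionRing.injective O K hu, sub_eq_zero.mp (Subtype.ext hss')]

end quadLattice

end QuadLattice

theorem stmt6_general (O : Type*) [CommRing O] [IsDomain O]
    (K : Type*) [Field K] [Algebra O K] [IsFractionRing O K]
    (μ : Ideal O)
    (z : O) (hsq : μ * μ = Ideal.span {z})
    (abar : O) (bbar lam : Oˣ) :
    let f : O → K := algebraMap O K
    let a : K := f abar / f z
    let b : K := f bbar / f z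
    let O1 : Submodule O K := LinearMap.range (Algebra.linearMap O K)
    let μK : Submodule O K := Submodule.map (Algebra.linearMap O K) μ
    let A : Submodule O (K × K) := O1.prod μK
    let ε : K × K → K := fun p => f lam * p.1
    (∀ p : A, ε (p : K × K) ∈ O1) ∧
    (∀ φ : A →ₗ[O] O, ∃! x : A, ∀ y : A,
        f (φ y) = ε (qmul a b (x : K × K) (y : K × K))) := by
  intro f a b O1 μK A ε
  refine ⟨fun p => ?_, fun φ => ?_⟩
  · obtain ⟨u, hu⟩ := (Submodule.mem_prod.mp p.2).1
    exact ⟨lam * u, by simp [ε, f, ← hu]⟩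
  obtain ⟨s, hs, hs_mul⟩ := exists_forall_div_mul_eq (K := K) hsq (φ ∘ₗ quadLattice.inr K μ)
  let c : O := ↑(lam * bbar)⁻¹
  have hc : f lam * f bbar * f c = 1 := by
    simp only [f, ← map_mul, c, ← Units.val_mul, mul_inv_cancel, Units.val_one, map_one]
  let x : quadLattice K μ :=
    (lam⁻¹ * φ (quadLattice.one K μ) : O) • quadLattice.one K μ + quadLattice.inr K μ (c • ⟨s, hs⟩)
  have hx : ∀ y : A, f (φ y) = ε (qmul a b x y) := by
    intro y
    obtain ⟨v, t, rfl⟩ := quadLattice.exists_eq_smul_one_add_inr y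
    have ht := hs_mul t
    have hlam : f lam * f ↑lam⁻¹ = 1 := by
      simp only [f, ← map_mul, Units.mul_inv, map_one]
    simp only [x, ε, qmul, quadLattice.coe_smul_one_add_inr, LinearMap.comp_apply] at ht ⊢
    simp only [f, b, map_add, map_smul, smul_eq_mul, SetLike.val_smul, map_mul] at ht hc hlam ⊢
    linear_combination (-(algebraMap O K v * algebraMap O K (φ (quadLattice.one K μ)))) * hlam - ht
      - (algebraMap O K s / algebraMap O K z * algebraMap O K t) * hc
  refine ⟨x, hx, fun x' hx' => quadLattice.eq_of_forall_qmul_fst_eq hsq a bbar.ne_zero fun y => ?_⟩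
  have hlam : f lam ≠ 0 := by simp [f]
  exact mul_left_cancel₀ hlam ((hx' y).symm.trans (hx y))

/-- For the rank-two algebra `A = O·1 ⊕ μ·X` with `X² = z⁻¹ā X + z⁻¹b̄`, `ā ∈ O`,
`b̄ ∈ O^×`, the trace `ε(x·1 + y·X) = λ x` with `λ ∈ O^×` takes values in `O` on `A`
and is a nondegenerate trace: every `O`-linear functional on `A` is of the form
`y ↦ ε(xy)` for a unique `x ∈ A`. -/
theorem stmt6 (O : Type*) [CommRing O] [IsDomain O] [IsDedekindDomain O]
    (K : Type*) [Field K] [Algebra O K] [IsFractionRing O K]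
    (μ : Ideal O) (hnp : ¬ Submodule.IsPrincipal μ)
    (z : O) (hsq : μ * μ = Ideal.span {z})
    (abar : O) (bbar lam : Oˣ) :
    let f : O → K := algebraMap O K
    let a : K := f abar / f z
    let b : K := f bbar / f z
    let O1 : Submodule O K := LinearMap.range (Algebra.linearMap O K)
    let μK : Submodule O K := Submodule.map (Algebra.linearMap O K) μ
    let A : Submodule O (K × K) := O1.prod μK
    let ε : K × K → K := fun p => f lam * p.1
    (∀ p : A, ε (p : K × K) ∈ O1) ∧
    (∀ φ : A →ₗ[O] O, ∃! x : A, ∀ y : A,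
        f (φ y) = ε (qmul a b (x : K × K) (y : K × K))) :=
  stmt6_general O K μ z hsq abar bbar lam
end

section
/- Let O be a Dedekind domain, μ a non-principal ideal with μ² = (z), A = O·1 ⊕ μ·X with X² = z⁻¹ā·X + z⁻¹b̄ (ā ∈ μ, b̄ ∈ O). Let m : A ⊗_O A → A be the multiplication map. Choose generators u₁,…,u_k of μ and u'₁,…,u'_k ∈ μ with Σ u_j u'_j = z. Define X_u = uX ⊗ 1 − 1 ⊗ uX for u ∈ μ, and X̂ = Σ_j u_jX ⊗ u'_jX − (ā X ⊗ 1 + b̄ 1 ⊗ 1). Then ker(m) = X_μ ⊕ O·X̂, where X_μ = {X_u : u ∈ μ} is the O-submodule of all such X_u. -/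
/-- The element of `K⁴` (coordinates `1⊗1, 1⊗X, X⊗1, X⊗X`) representing the tensor
`p ⊗ q` of two elements `p, q` of `K·1 ⊕ K·X ≅ K × K`. -/
def tens {K : Type*} [Field K] (p q : K × K) : Fin 4 → K :=
  ![p.1 * q.1, p.1 * q.2, p.2 * q.1, p.2 * q.2]

/-- The multiplication map `m : K² ⊗ K² → K²` for `X² = aX + b`, in coordinates. -/
noncomputable def mulMap {K : Type*} [Field K] (a b : K) : (Fin 4 → K) →ₗ[K] K × K :=
  LinearMap.prod
    ((LinearMap.proj (0 : Fin 4) : (Fin 4 → K) →ₗ[K] K) +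
      b • (LinearMap.proj (3 : Fin 4) : (Fin 4 → K) →ₗ[K] K))
    ((LinearMap.proj (1 : Fin 4) : (Fin 4 → K) →ₗ[K] K) +
      (LinearMap.proj (2 : Fin 4) : (Fin 4 → K) →ₗ[K] K) +
      a • (LinearMap.proj (3 : Fin 4) : (Fin 4 → K) →ₗ[K] K))

/-- `X_v = vX ⊗ 1 − 1 ⊗ vX` in coordinates. -/
def Xel {K : Type*} [Field K] (v : K) : Fin 4 → K := ![0, -v, v, 0]

lemma mulMap_apply {K : Type*} [Field K] (a b : K) (w : Fin 4 → K) :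
    mulMap a b w = (w 0 + b * w 3, w 1 + w 2 + a * w 3) := by
  simp [mulMap, smul_eq_mul]

/-- `ker(m) = X_μ ⊕ O·X̂` for the rank-two algebra `A = O·1 ⊕ μ·X`, `μ² = (z)`,
`X² = z⁻¹ā X + z⁻¹b̄` with `ā ∈ μ`, `b̄ ∈ O`; here `A ⊗ A` is realized as the
`O`-span `AA` of the products `tens p q`, `p, q ∈ A`, inside `K⁴`,
`X̂ = Σ_j u_jX ⊗ u'_jX − (āX ⊗ 1 + b̄·1 ⊗ 1)` for generators `u_j` of `μ` and
`u'_j ∈ μ` with `Σ u_j u'_j = z`, and `X_μ` is the span of the `X_u`, `u ∈ μ`. -/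
theorem stmt7 (O : Type*) [CommRing O] [IsDomain O] [IsDedekindDomain O]
    (K : Type*) [Field K] [Algebra O K] [IsFractionRing O K]
    (μ : Ideal O) (hnp : ¬ Submodule.IsPrincipal μ)
    (z : O) (hsq : μ * μ = Ideal.span {z})
    (abar bbar : O) (habar : abar ∈ μ)
    (k : ℕ) (u u' : Fin k → O)
    (hu : ∀ j, u j ∈ μ) (hu' : ∀ j, u' j ∈ μ)
    (hspan : Ideal.span (Set.range u) = μ)
    (hsum : ∑ j, u j * u' j = z) :
    let f : O → K := algebraMap O K
    let a : K := f abar / f z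
    let b : K := f bbar / f z
    let O1 : Submodule O K := LinearMap.range (Algebra.linearMap O K)
    let μK : Submodule O K := Submodule.map (Algebra.linearMap O K) μ
    let A : Submodule O (K × K) := O1.prod μK
    let AA : Submodule O (Fin 4 → K) :=
      Submodule.span O {w | ∃ p ∈ A, ∃ q ∈ A, w = tens p q}
    let Xμ : Submodule O (Fin 4 → K) :=
      Submodule.span O {w | ∃ v ∈ μ, w = Xel (f v)}
    let Xhat : Fin 4 → K :=
      (∑ j, tens ((0 : K), f (u j)) ((0 : K), f (u' j))) -
        (tens ((0 : K), f abar) ((1 : K), (0 : K)) +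
          tens (f bbar, (0 : K)) ((1 : K), (0 : K)))
    AA ⊓ LinearMap.ker ((mulMap a b).restrictScalars O) =
        Xμ ⊔ Submodule.span O {Xhat} ∧
      Disjoint Xμ (Submodule.span O {Xhat}) := by
  intro f a b O1 μK A AA Xμ Xhat
  have hfinj : Function.Injective f := IsFractionRing.injective O K
  have hfm : ∀ x y : O, f (x * y) = f x * f y := fun x y => map_mul (algebraMap O K) x y
  have hfa : ∀ x y : O, f (x + y) = f x + f y := fun x y => map_add (algebraMap O K) x y
  have hf0 : f 0 = 0 := map_zero (algebraMap O K)
  have hf1 : f 1 = 1 := map_one (algebraMap O K)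
  have hfn : ∀ x : O, f (-x) = -(f x) := fun x => map_neg (algebraMap O K) x
  have hfs : ∀ (c : O) (x : K), c • x = f c * x := fun c x => Algebra.smul_def c x
  have hz : z ≠ 0 := by
    rintro rfl
    apply hnp
    have h0 : μ * μ = ⊥ := by rw [hsq, Ideal.span_singleton_eq_bot]
    rcases Ideal.mul_eq_bot.mp h0 with h | h <;>
      exact ⟨⟨0, by rw [h]; exact (Ideal.span_singleton_eq_bot.mpr rfl).symm⟩⟩
  have hfz : f z ≠ 0 := fun h => hz (hfinj (by rw [h, hf0]))
  have ha : a * f z = f abar := div_mul_cancel₀ _ hfz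
  have hb : b * f z = f bbar := div_mul_cancel₀ _ hfz
  -- Xhat in coordinates
  have hsumvec : (∑ j, tens ((0 : K), f (u j)) ((0 : K), f (u' j))) =
      ![0, 0, 0, f z] := by
    funext i
    simp only [Finset.sum_apply]
    fin_cases i
    · show ∑ j ∈ Finset.univ, tens ((0 : K), f (u j)) ((0 : K), f (u' j)) 0 = 0
      simp [tens]
    · show ∑ j ∈ Finset.univ, tens ((0 : K), f (u j)) ((0 : K), f (u' j)) 1 = 0
      simp [tens]
    · show ∑ j ∈ Finset.univ, tens ((0 : K), f (u j)) ((0 : K), f (u' j)) 2 = 0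
      simp [tens]
    · show ∑ j ∈ Finset.univ, tens ((0 : K), f (u j)) ((0 : K), f (u' j)) 3 = f z
      calc ∑ j ∈ Finset.univ, tens ((0 : K), f (u j)) ((0 : K), f (u' j)) 3
          = ∑ j ∈ Finset.univ, f (u j * u' j) := by
            refine Finset.sum_congr rfl fun j _ => ?_
            show f (u j) * f (u' j) = f (u j * u' j)
            rw [hfm]
        _ = f z := by rw [← map_sum (algebraMap O K), hsum]
  have hXhat : Xhat = ![-(f bbar), 0, -(f abar), f z] := by
    show (∑ j, tens ((0 : K), f (u j)) ((0 : K), f (u' j))) -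
        (tens ((0 : K), f abar) ((1 : K), (0 : K)) +
          tens (f bbar, (0 : K)) ((1 : K), (0 : K))) = _
    rw [hsumvec]
    funext i
    fin_cases i <;> simp [tens]
  -- membership lemmas for A
  have hA1 : ((1 : K), (0 : K)) ∈ A := ⟨⟨1, hf1⟩, Submodule.zero_mem _⟩
  have hAO : ∀ s : O, ((f s : K), (0 : K)) ∈ A :=
    fun s => ⟨⟨s, rfl⟩, Submodule.zero_mem _⟩
  have hAμ : ∀ v ∈ μ, ((0 : K), f v) ∈ A :=
    fun v hv => ⟨⟨0, hf0⟩, ⟨v, hv, rfl⟩⟩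
  -- Xhat is in AA
  have hXhatAA : Xhat ∈ AA := by
    apply Submodule.sub_mem
    · exact Submodule.sum_mem _ fun j _ => Submodule.subset_span
        ⟨_, hAμ _ (hu j), _, hAμ _ (hu' j), rfl⟩
    · exact Submodule.add_mem _
        (Submodule.subset_span ⟨_, hAμ _ habar, _, hA1, rfl⟩)
        (Submodule.subset_span ⟨_, hAO bbar, _, hA1, rfl⟩)
  -- Xhat is in the kernel
  have hXhatker : Xhat ∈ LinearMap.ker ((mulMap a b).restrictScalars O) := by
    rw [LinearMap.mem_ker]
    show mulMap a b Xhat = 0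
    rw [mulMap_apply, hXhat, Prod.mk_eq_zero]
    constructor
    · show -(f bbar) + b * f z = 0
      linear_combination hb
    · show 0 + -(f abar) + a * f z = 0
      linear_combination ha
  -- Xel generators are in AA and in the kernel
  have hXelAA : ∀ v ∈ μ, Xel (f v) ∈ AA := by
    intro v hv
    have hXe : Xel (f v) = tens ((0 : K), f v) ((1 : K), (0 : K)) -
        tens ((1 : K), (0 : K)) ((0 : K), f v) := by
      funext i; fin_cases i <;> simp [Xel, tens]
    rw [hXe]
    exact Submodule.sub_mem _
      (Submodule.subset_span ⟨_, hAμ _ hv, _, hA1, rfl⟩)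
      (Submodule.subset_span ⟨_, hA1, _, hAμ _ hv, rfl⟩)
  have hXelker : ∀ v : K, Xel v ∈ LinearMap.ker ((mulMap a b).restrictScalars O) := by
    intro v
    rw [LinearMap.mem_ker]
    show mulMap a b (Xel v) = 0
    rw [mulMap_apply, Prod.mk_eq_zero]
    constructor
    · show (0 : K) + b * 0 = 0
      ring
    · show -v + v + a * 0 = 0
      ring
  -- coordinates of elements of AA
  have hAAcoord : ∀ w ∈ AA, (∃ s, f s = w 0) ∧ (∃ v ∈ μ, f v = w 1) ∧
      (∃ v ∈ μ, f v = w 2) ∧ (∃ r, f (z * r) = w 3) := by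
    intro w hw
    refine Submodule.span_induction
      (p := fun x _ => (∃ s, f s = x 0) ∧ (∃ v ∈ μ, f v = x 1) ∧
        (∃ v ∈ μ, f v = x 2) ∧ (∃ r, f (z * r) = x 3)) ?_ ?_ ?_ ?_ hw
    · rintro x ⟨p, hp, q, hq, rfl⟩
      obtain ⟨⟨s, hs⟩, v, hv, hve⟩ := Submodule.mem_prod.mp hp
      obtain ⟨⟨t, ht⟩, v', hv', hve'⟩ := Submodule.mem_prod.mp hq
      have hp1 : p.1 = f s := hs.symm
      have hp2 : p.2 = f v := hve.symm
      have hq1 : q.1 = f t := ht.symm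
      have hq2 : q.2 = f v' := hve'.symm
      refine ⟨⟨s * t, ?_⟩, ⟨s * v', Ideal.mul_mem_left _ _ hv', ?_⟩,
        ⟨v * t, Ideal.mul_mem_right _ _ hv, ?_⟩, ?_⟩
      · show f (s * t) = tens p q 0
        simp [tens, hp1, hq1, hfm]
      · show f (s * v') = tens p q 1
        simp [tens, hp1, hq2, hfm]
      · show f (v * t) = tens p q 2
        simp [tens, hp2, hq1, hfm]
      · have hmem : v * v' ∈ Ideal.span {z} := hsq ▸ Ideal.mul_mem_mul hv hv'
        obtain ⟨r, hr⟩ := Ideal.mem_span_singleton'.mp hmem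
        refine ⟨r, ?_⟩
        show f (z * r) = tens p q 3
        rw [mul_comm z r, hr, hfm]
        simp [tens, hp2, hq2]
    · exact ⟨⟨0, by simp [hf0]⟩, ⟨0, μ.zero_mem, by simp [hf0]⟩,
        ⟨0, μ.zero_mem, by simp [hf0]⟩, ⟨0, by simp [hf0]⟩⟩
    · rintro x y - - ⟨⟨s, hs⟩, ⟨v1, hv1, he1⟩, ⟨v2, hv2, he2⟩, ⟨r, hr⟩⟩
        ⟨⟨s', hs'⟩, ⟨v1', hv1', he1'⟩, ⟨v2', hv2', he2'⟩, ⟨r', hr'⟩⟩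
      refine ⟨⟨s + s', ?_⟩, ⟨v1 + v1', μ.add_mem hv1 hv1', ?_⟩,
        ⟨v2 + v2', μ.add_mem hv2 hv2', ?_⟩, ⟨r + r', ?_⟩⟩
      · rw [hfa, hs, hs']; simp
      · rw [hfa, he1, he1']; simp
      · rw [hfa, he2, he2']; simp
      · rw [mul_add, hfa, hr, hr']; simp
    · rintro c x - ⟨⟨s, hs⟩, ⟨v1, hv1, he1⟩, ⟨v2, hv2, he2⟩, ⟨r, hr⟩⟩
      refine ⟨⟨c * s, ?_⟩, ⟨c * v1, Ideal.mul_mem_left _ _ hv1, ?_⟩,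
        ⟨c * v2, Ideal.mul_mem_left _ _ hv2, ?_⟩, ⟨c * r, ?_⟩⟩
      · rw [hfm, hs]; simp [hfs]
      · rw [hfm, he1]; simp [hfs]
      · rw [hfm, he2]; simp [hfs]
      · have : z * (c * r) = c * (z * r) := by ring
        rw [this, hfm, hr]; simp [hfs]
  constructor
  · apply le_antisymm
    · -- hard direction
      intro w hw
      rw [Submodule.mem_inf] at hw
      obtain ⟨hwAA, hwker⟩ := hw
      obtain ⟨⟨s, hs⟩, ⟨v1, hv1, he1⟩, ⟨v2, hv2, he2⟩, ⟨r, hr⟩⟩ := hAAcoord w hwAA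
      rw [LinearMap.mem_ker] at hwker
      have heq : (w 0 + b * w 3, w 1 + w 2 + a * w 3) = ((0 : K), (0 : K)) := by
        rw [← mulMap_apply]; exact hwker
      have eq1 : w 0 + b * w 3 = 0 := congrArg Prod.fst heq
      have eq2 : w 1 + w 2 + a * w 3 = 0 := congrArg Prod.snd heq
      have hw3 : w 3 = f z * f r := by rw [← hr, hfm]
      have hbw : b * w 3 = f r * f bbar := by
        rw [hw3, ← mul_assoc, hb]; ring
      have haw : a * w 3 = f r * f abar := by
        rw [hw3, ← mul_assoc, ha]; ring
      have hrhs : Xel (f (-v1)) + r • Xhat =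
          ![-(f r * f bbar), f v1, -(f v1) - f r * f abar, f r * f z] := by
        rw [hXhat]
        funext i
        fin_cases i <;> simp [Xel, hfs, hfn, Pi.add_apply, Pi.smul_apply] <;> ring
      have key : w = Xel (f (-v1)) + r • Xhat := by
        rw [hrhs]
        funext i
        fin_cases i
        · show w 0 = -(f r * f bbar)
          linear_combination eq1 - hbw
        · show w 1 = f v1
          exact he1.symm
        · show w 2 = -(f v1) - f r * f abar
          linear_combination eq2 - haw + he1
        · show w 3 = f r * f z
          rw [hw3, mul_comm]
      rw [key]
      exact Submodule.add_mem _
        (Submodule.mem_sup_left (Submodule.subset_span ⟨-v1, μ.neg_mem hv1, rfl⟩))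
        (Submodule.mem_sup_right (Submodule.smul_mem _ r (Submodule.subset_span rfl)))
    · -- easy direction
      apply sup_le
      · rw [Submodule.span_le]
        rintro x ⟨v, hv, rfl⟩
        exact Submodule.mem_inf.mpr ⟨hXelAA v hv, hXelker _⟩
      · rw [Submodule.span_le, Set.singleton_subset_iff]
        exact Submodule.mem_inf.mpr ⟨hXhatAA, hXhatker⟩
  · -- disjointness
    rw [Submodule.disjoint_def]
    intro x hx1 hx2
    have h3 : x 3 = 0 := by
      refine Submodule.span_induction (p := fun y _ => y 3 = 0) ?_ rfl ?_ ?_ hx1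
      · rintro y ⟨v, hv, rfl⟩
        show (0 : K) = 0
        rfl
      · rintro y z2 - - hy hz2
        show y 3 + z2 3 = 0
        rw [hy, hz2, add_zero]
      · rintro c y - hy
        show c • y 3 = 0
        rw [hy, smul_zero]
    obtain ⟨r, rfl⟩ := Submodule.mem_span_singleton.mp hx2
    have hmz : f r * f z = 0 := by
      have h3' : r • Xhat 3 = 0 := h3
      rwa [hXhat, hfs] at h3'
    have hr0 : r = 0 := by
      rcases mul_eq_zero.mp hmz with h | h
      · exact hfinj (by rw [h, hf0])
      · exact absurd h hfz
    rw [hr0, zero_smul]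
end

section
/- Let O be a Dedekind domain, μ a non-principal ideal with μ² = (z), and suppose μ is prime. Suppose elements ε(1) ∈ O, t ∈ O, c ∈ O, d ∈ μ, d' ∈ O satisfy d = 1 − c·ε(1), c·z = −d·t, d'·z = −d·ε(1), and d'·t = c·ε(1). Then d ∈ (z), i.e. d = z·d̄ for some d̄ ∈ O, and moreover d̄·(z − t·ε(1)) = 1, so both d̄ and z − t·ε(1) are units of O. -/
/-!
`ε(1) ∉ μ` because `d + c·ε(1) = 1` with `d ∈ μ`, while `d'·z = −d·ε(1)` puts `ε(1)·d` in
`(z) = μ²`; for a prime of a Dedekind domain this forces `d ∈ μ² = (z)`. With `d = z·d̄`,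
cancelling `z` in `c·z = −d·t` gives `c = −d̄·t`, and then `1 = d + c·ε(1) = d̄·(z − t·ε(1))`.
-/

theorem Ideal.notMem_of_mem_of_add_mul_eq_one {R : Type*} [CommRing R] {I : Ideal R}
    (hI : I ≠ ⊤) {d c e : R} (hd : d ∈ I) (h : d + c * e = 1) : e ∉ I := fun he ↦
  hI <| (Ideal.eq_top_iff_one I).2 <| h ▸ I.add_mem hd (I.mul_mem_left c he)

theorem Ideal.IsPrime.dvd_of_dvd_mul_left_of_notMem {R : Type*} [CommRing R]
    [IsDedekindDomain R] {P : Ideal R} [P.IsPrime] {z a b : R} (hsq : P * P = Ideal.span {z})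
    (ha : a ∉ P) (h : z ∣ a * b) : z ∣ b := by
  rw [← Ideal.mem_span_singleton, ← hsq, ← sq] at h ⊢
  exact (Ideal.IsPrime.mul_mem_pow P h).resolve_left ha

theorem stmt14_general (O : Type*) [CommRing O] [IsDedekindDomain O]
    (μ : Ideal O) (hpr : μ.IsPrime)
    (z : O) (hz : z ≠ 0) (hsq : μ * μ = Ideal.span {z})
    (ε1 t c d' : O) (d : O) (hd : d ∈ μ)
    (h1 : d = 1 - c * ε1)
    (h2 : c * z = -(d * t))
    (h3 : d' * z = -(d * ε1)) :
    ∃ dbar : O, d = z * dbar ∧ dbar * (z - t * ε1) = 1 ∧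
      IsUnit dbar ∧ IsUnit (z - t * ε1) := by
  have hε1 : ε1 ∉ μ :=
    Ideal.notMem_of_mem_of_add_mul_eq_one hpr.ne_top hd (by rw [h1]; ring)
  have hdvd : z ∣ ε1 * d := ⟨-d', by linear_combination h3⟩
  obtain ⟨dbar, hdbar⟩ := hpr.dvd_of_dvd_mul_left_of_notMem hsq hε1 hdvd
  have hc : c = -(dbar * t) :=
    mul_right_cancel₀ hz (by linear_combination h2 - t * hdbar)
  have hinv : dbar * (z - t * ε1) = 1 := by linear_combination h1 - hdbar - ε1 * hc
  exact ⟨dbar, hdbar, hinv, .of_mul_eq_one _ hinv, .of_mul_eq_one_right _ hinv⟩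

/-- Case `ε(X) = 1` (i.e. `ε_X = z`): for a non-principal prime ideal `μ` with
`μ² = (z)` in a Dedekind domain, if `d = 1 − c·ε(1)`, `c·z = −d·t`, `d'·z = −d·ε(1)`
and `d'·t = c·ε(1)` with `d ∈ μ`, then `d = z·d̄` for some `d̄ ∈ O` with
`d̄·(z − t·ε(1)) = 1`; in particular `d̄` and `z − t·ε(1)` are units of `O`. -/
theorem stmt14 (O : Type*) [CommRing O] [IsDomain O] [IsDedekindDomain O]
    (μ : Ideal O) (hnp : ¬ Submodule.IsPrincipal μ) (hpr : μ.IsPrime)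
    (z : O) (hz : z ≠ 0) (hsq : μ * μ = Ideal.span {z})
    (ε1 t c d' : O) (d : O) (hd : d ∈ μ)
    (h1 : d = 1 - c * ε1)
    (h2 : c * z = -(d * t))
    (h3 : d' * z = -(d * ε1))
    (h4 : d' * t = c * ε1) :
    ∃ dbar : O, d = z * dbar ∧ dbar * (z - t * ε1) = 1 ∧
      IsUnit dbar ∧ IsUnit (z - t * ε1) :=
  stmt14_general O μ hpr z hz hsq ε1 t c d' d hd h1 h2 h3
end

section
/- Let O be a Dedekind domain, μ a nonzero ideal with μ^{N−1} = (z), and A_N = ⊕_{j=0}^{N−1} μ^j X^j ⊆ K[X]/(X^N) as above. Define ε : A_N → K by ε(X^{N−1}) = z⁻¹ and ε(X^m) = 0 for 0 ≤ m < N−1, extended K-linearly and restricted to A_N. Then ε maps A_N into O, and the induced map ε̃ : A_N → Hom_O(A_N, O), ε̃(x)(y) = ε(xy), is an isomorphism of O-modules; i.e., A_N is a Frobenius O-algebra. -/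
/-!
`A_N` is the direct sum of the ideals `μ^j` placed in degree `j`, and an `O`-linear map
`μ^k → O` is multiplication by some `c ∈ K` with `c μ^k ⊆ O` (compare it with its value at one
nonzero element). Given `φ`, record these multipliers `c_k`. The trace pairs degree `j` with
degree `N - 1 - j`: `ε(xy) = z⁻¹ ∑ₖ x_{N-1-k} y_k`. So `x_j = z c_{N-1-j}` represents `φ`, and it
lies in `μ^j` because `z ∈ μ^{N-1-j} μ^j`. It is unique because no `μ^k` is zero.
-/

/-- Truncated (mod `X^N`) multiplication on `K[X]/(X^N)`, realized on coefficient
vectors `Fin N → K`. -/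
def truncMul {K : Type*} [Field K] {N : ℕ} (p q : Fin N → K) : Fin N → K :=
  fun j => ∑ i : Fin N, ∑ k : Fin N, if (i : ℕ) + (k : ℕ) = (j : ℕ) then p i * q k else 0

open Finset

theorem truncMul_apply_of_val_eq_sub_one {K : Type*} [Field K] {N : ℕ} (u v : Fin N → K)
    (j : Fin N) (hj : (j : ℕ) = N - 1) : truncMul u v j = ∑ k, u k.rev * v k := by
  rw [truncMul, sum_comm]
  refine sum_congr rfl fun k _ => ?_
  rw [sum_eq_single k.rev]
  · rw [if_pos (by rw [Fin.val_rev]; omega)]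
  · intro i _ hi
    rw [if_neg]
    contrapose! hi
    ext
    rw [Fin.val_rev]
    omega
  · simp

section

variable {O K ι : Type*} [CommRing O] [Field K] [Algebra O K]

theorem Ideal.exists_algebraMap_linearMap_eq_mul [IsFractionRing O K] (I : Ideal O)
    (ψ : I →ₗ[O] O) : ∃ c : K, ∀ b : I, algebraMap O K (ψ b) = c * algebraMap O K b := by
  by_cases hI : I = ⊥
  · subst hI
    refine ⟨0, fun b => ?_⟩
    rw [Subsingleton.elim b 0]
    simp
  obtain ⟨a, haI, ha⟩ := (Submodule.ne_bot_iff I).mp hI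
  have hfa : algebraMap O K a ≠ 0 := (map_ne_zero_iff _ (IsFractionRing.injective O K)).mpr ha
  refine ⟨algebraMap O K (ψ ⟨a, haI⟩) / algebraMap O K a, fun b => ?_⟩
  have hswap : a * ψ b = b * ψ ⟨a, haI⟩ := by
    rw [← smul_eq_mul, ← map_smul, ← smul_eq_mul, ← map_smul]
    exact congrArg ψ (Subtype.ext (mul_comm _ _))
  rw [div_mul_eq_mul_div, eq_div_iff hfa, ← map_mul, ← map_mul, mul_comm, hswap, mul_comm]

variable (K) in
def piIdealSubmodule (I : ι → Ideal O) : Submodule O (ι → K) :=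
  Submodule.pi Set.univ fun j => Submodule.map (Algebra.linearMap O K) (I j)

theorem mem_piIdealSubmodule {I : ι → Ideal O} {v : ι → K} :
    v ∈ piIdealSubmodule K I ↔ ∀ j, ∃ b ∈ I j, algebraMap O K b = v j := by
  simp [piIdealSubmodule, Submodule.mem_pi]

theorem single_algebraMap_mem_piIdealSubmodule [DecidableEq ι] {I : ι → Ideal O} {k : ι}
    {b : O} (hb : b ∈ I k) : Pi.single k (algebraMap O K b) ∈ piIdealSubmodule K I := by
  refine mem_piIdealSubmodule.mpr fun j => ?_
  rcases eq_or_ne j k with rfl | hjk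
  · exact ⟨b, hb, by simp⟩
  · exact ⟨0, zero_mem _, by simp [hjk]⟩

theorem exists_coeff_of_linearMap_piIdealSubmodule [IsFractionRing O K] [Fintype ι]
    (I : ι → Ideal O) (φ : piIdealSubmodule K I →ₗ[O] O) :
    ∃ c : ι → K, (∀ k, ∀ b ∈ I k, c k * algebraMap O K b ∈ Set.range (algebraMap O K)) ∧
      ∀ y : piIdealSubmodule K I, algebraMap O K (φ y) = ∑ k, c k * (y : ι → K) k := by
  classical
  let single (k : ι) : I k →ₗ[O] piIdealSubmodule K I :=
    LinearMap.codRestrict _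
      (LinearMap.single O (fun _ => K) k ∘ₗ Algebra.linearMap O K ∘ₗ (I k).subtype)
      fun b => single_algebraMap_mem_piIdealSubmodule b.2
  choose c hc using fun k => (I k).exists_algebraMap_linearMap_eq_mul (K := K) (φ ∘ₗ single k)
  refine ⟨c, fun k b hb => ⟨_, hc k ⟨b, hb⟩⟩, fun y => ?_⟩
  choose b hbI hb using mem_piIdealSubmodule.mp y.2
  have hy : y = ∑ k, single k ⟨b k, hbI k⟩ := by
    ext1
    rw [AddSubmonoidClass.coe_finsetSum]
    conv_lhs => rw [← Finset.univ_sum_single (y : ι → K)]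
    exact sum_congr rfl fun k _ => congrArg (Pi.single k) (hb k).symm
  conv_lhs => rw [hy, map_sum, map_sum]
  refine sum_congr rfl fun k _ => ?_
  rw [← hb k]
  exact hc k _

theorem mul_algebraMap_mem_map_of_mem_mul {I J : Ideal O} {c : K}
    (hc : ∀ b ∈ I, c * algebraMap O K b ∈ Set.range (algebraMap O K)) {w : O}
    (hw : w ∈ I * J) : c * algebraMap O K w ∈ Submodule.map (Algebra.linearMap O K) J := by
  refine Submodule.mul_induction_on hw (fun m hm n hn => ?_) fun x y hx hy => ?_
  · obtain ⟨r, hr⟩ := hc m hm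
    exact Submodule.mem_map.mpr ⟨r * n, J.mul_mem_left r hn, by simp [hr, mul_assoc]⟩
  · rw [map_add, mul_add]
    exact add_mem hx hy

theorem algebraMap_mul_rev_mem_piIdealSubmodule_pow {μ : Ideal O} {N : ℕ} {z : O}
    (hz : z ∈ μ ^ (N - 1)) {c : Fin N → K}
    (hc : ∀ k : Fin N, ∀ b ∈ μ ^ (k : ℕ), c k * algebraMap O K b ∈ Set.range (algebraMap O K)) :
    (fun j => algebraMap O K z * c j.rev) ∈ piIdealSubmodule K fun j : Fin N => μ ^ (j : ℕ) := by
  refine mem_piIdealSubmodule.mpr fun j => ?_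
  have hzj : z ∈ μ ^ (j.rev : ℕ) * μ ^ (j : ℕ) := by
    rwa [← pow_add, Fin.val_rev, show N - (j + 1) + j = N - 1 by omega]
  obtain ⟨b, hb, hfb⟩ := mul_algebraMap_mem_map_of_mem_mul (hc j.rev) hzj
  exact ⟨b, hb, hfb.trans (mul_comm _ _)⟩

theorem eq_of_forall_sum_mul_eq [IsFractionRing O K] [Fintype ι] {I : ι → Ideal O}
    (hI : ∀ k, I k ≠ ⊥) {u v : ι → K}
    (h : ∀ y ∈ piIdealSubmodule K I, ∑ k, u k * y k = ∑ k, v k * y k) : u = v := by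
  classical
  funext k
  obtain ⟨b, hbI, hb⟩ := (Submodule.ne_bot_iff _).mp (hI k)
  have hk := h _ (single_algebraMap_mem_piIdealSubmodule hbI)
  simp only [Pi.single_apply, mul_ite, mul_zero, sum_ite_eq', mem_univ, if_true] at hk
  exact mul_right_cancel₀ ((map_ne_zero_iff _ (IsFractionRing.injective O K)).mpr hb) hk

end

/-- For a nonzero ideal `μ` of a Dedekind domain `O` with `μ^{N−1} = (z)`, the
`O`-subalgebra `A_N = O·1 ⊕ μX ⊕ … ⊕ μ^{N−1}X^{N−1}` of `K[X]/(X^N)` with trace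
`ε(X^{N−1}) = z⁻¹`, `ε(X^m) = 0` for `m < N−1`, is Frobenius: `ε` takes values in
`O` on `A_N`, and every `O`-linear functional on `A_N` is `y ↦ ε(xy)` for a unique
`x ∈ A_N`. -/
theorem stmt18 (O : Type*) [CommRing O] [IsDomain O]
    (K : Type*) [Field K] [Algebra O K] [IsFractionRing O K]
    (μ : Ideal O) (hμ : μ ≠ ⊥) (N : ℕ) (hN : 2 ≤ N)
    (z : O) (hz : μ ^ (N - 1) = Ideal.span {z}) :
    let f : O → K := algebraMap O K
    let O1 : Submodule O K := LinearMap.range (Algebra.linearMap O K)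
    let AN : Submodule O (Fin N → K) :=
      Submodule.pi Set.univ fun j : Fin N =>
        Submodule.map (Algebra.linearMap O K) (μ ^ (j : ℕ))
    let ε : (Fin N → K) → K :=
      fun p => (f z)⁻¹ * p ⟨N - 1, Nat.sub_lt (by omega) Nat.one_pos⟩
    (∀ p : AN, ε (p : Fin N → K) ∈ O1) ∧
    (∀ φ : AN →ₗ[O] O, ∃! x : AN, ∀ y : AN,
        f (φ y) = ε (truncMul (x : Fin N → K) (y : Fin N → K))) := by
  intro f O1 AN ε
  have hfz : f z ≠ 0 := (map_ne_zero_iff _ (IsFractionRing.injective O K)).mpr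
    (Ideal.span_singleton_eq_bot.not.mp (hz ▸ pow_ne_zero (N - 1) hμ))
  have hε : ∀ u v, ε (truncMul u v) = (f z)⁻¹ * ∑ k, u k.rev * v k :=
    fun u v => congrArg _ (truncMul_apply_of_val_eq_sub_one u v _ rfl)
  refine ⟨fun p => ?_, fun φ => existsUnique_of_exists_of_unique ?_ ?_⟩
  · obtain ⟨b, hb, hpb⟩ := (mem_piIdealSubmodule (K := K) (I := fun j : Fin N => μ ^ (j : ℕ))).mp
      p.2 ⟨N - 1, by omega⟩
    obtain ⟨r, rfl⟩ := Ideal.mem_span_singleton'.mp (hz ▸ hb)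
    exact ⟨r, by simp [ε, f, ← hpb, mul_comm (algebraMap O K r), hfz]⟩
  · obtain ⟨c, hc, hφ⟩ := exists_coeff_of_linearMap_piIdealSubmodule (K := K) _ φ
    refine ⟨⟨_, algebraMap_mul_rev_mem_piIdealSubmodule_pow
      (hz ▸ Ideal.mem_span_singleton_self z) hc⟩, fun y => ?_⟩
    rw [show f (φ y) = _ from hφ y, hε]
    simp only [Fin.rev_rev, mul_assoc, ← mul_sum]
    exact (inv_mul_cancel_left₀ hfz _).symm
  · intro x₁ x₂ h₁ h₂
    have hrev : (fun k : Fin N => (x₁ : Fin N → K) k.rev) = fun k => (x₂ : Fin N → K) k.rev :=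
      eq_of_forall_sum_mul_eq (I := fun k : Fin N => μ ^ (k : ℕ)) (fun k => pow_ne_zero _ hμ)
        fun y hy => mul_left_cancel₀ (inv_ne_zero hfz) <| by
          rw [← hε, ← hε, ← h₁ ⟨y, hy⟩, h₂ ⟨y, hy⟩]
    ext j
    simpa using congrFun hrev j.rev
end
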